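/- arXiv:2503.23906 — 2 statements merged into one kernel-verified Lean document; each statement's English description precedes it below -/
import Mathlib

section
/- Let ψ be a real polynomial of degree at least 2 and ψ_m its m-th iterate. Then there exists a constant C₀ ≥ 1 such that 1 + |x| ≤ C₀(1 + |ψ_m(x)|) for all x ∈ ℝ and all m ∈ ℕ. -/
open Polynomial Filter

theorem stmt_4 (ψ : Polynomial ℝ) (hd : 2 ≤ ψ.natDegree) :
    ∃ C₀ : ℝ, 1 ≤ C₀ ∧ ∀ m : ℕ, 1 ≤ m → ∀ x : ℝ,
      1 + |x| ≤ C₀ * (1 + |(fun y : ℝ => ψ.eval y)^[m] x|) := by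
  have hψ0 : ψ ≠ 0 := by
    intro h; simp [h] at hd
  -- Find R ≥ 1 with |y| ≥ R → 2|y| ≤ |ψ(y)|
  obtain ⟨R, hR1, hR⟩ : ∃ R : ℝ, 1 ≤ R ∧ ∀ y : ℝ, R ≤ |y| → 2 * |y| ≤ |ψ.eval y| := by
    set Q : ℝ[X] := ψ * ψ - C 4 * X ^ 2 with hQdef
    have hdψ : ψ.degree = (ψ.natDegree : WithBot ℕ) := degree_eq_natDegree hψ0
    have hdmul : (ψ * ψ).degree = ((ψ.natDegree + ψ.natDegree : ℕ) : WithBot ℕ) := by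
      rw [degree_mul, hdψ]; push_cast; ring
    have hlt : (C (4:ℝ) * X ^ 2).degree < (ψ * ψ).degree := by
      refine lt_of_le_of_lt (degree_C_mul_X_pow_le 2 (4:ℝ)) ?_
      rw [hdmul]
      exact_mod_cast (by omega : 2 < ψ.natDegree + ψ.natDegree)
    have hQdeg : Q.degree = ((ψ.natDegree + ψ.natDegree : ℕ) : WithBot ℕ) := by
      rw [hQdef, degree_sub_eq_left_of_degree_lt hlt, hdmul]
    have hQnd : Q.natDegree = ψ.natDegree + ψ.natDegree :=
      natDegree_eq_of_degree_eq_some hQdeg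
    have hQpos : 0 < Q.degree := by
      rw [hQdeg]; exact_mod_cast (by omega : 0 < ψ.natDegree + ψ.natDegree)
    have hQlc : Q.leadingCoeff = ψ.leadingCoeff * ψ.leadingCoeff := by
      rw [hQdef, sub_eq_add_neg, add_comm, leadingCoeff_add_of_degree_lt
        (by rwa [degree_neg]), leadingCoeff_mul]
    have hQlc0 : 0 ≤ Q.leadingCoeff := by rw [hQlc]; exact mul_self_nonneg _
    -- Q → +∞ at +∞
    have htop := Q.tendsto_atTop_of_leadingCoeff_nonneg hQpos hQlc0
    obtain ⟨N₁, hN₁⟩ := (htop.eventually_ge_atTop 0).exists_forall_of_atTop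
    -- Q(-·) → +∞ at +∞
    set Qn : ℝ[X] := Q.comp (-X) with hQn
    have hQneval : ∀ y : ℝ, Qn.eval y = Q.eval (-y) := by
      intro y; simp [hQn, eval_comp]
    have hQnnd : Qn.natDegree = Q.natDegree := by
      rw [hQn, natDegree_comp, natDegree_neg, natDegree_X, mul_one]
    have hQnpos : 0 < Qn.degree := by
      rw [← natDegree_pos_iff_degree_pos, hQnnd, hQnd]; omega
    have hQnlc : 0 ≤ Qn.leadingCoeff := by
      rw [hQn, leadingCoeff_comp (by simp)]
      simp only [leadingCoeff_neg, leadingCoeff_X]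
      rw [hQnd]
      rw [(by ring : -(1:ℝ) = (-1)), Even.neg_one_pow ⟨ψ.natDegree, rfl⟩, mul_one]
      exact hQlc0
    have hbot := Qn.tendsto_atTop_of_leadingCoeff_nonneg hQnpos hQnlc
    obtain ⟨N₂, hN₂⟩ := (hbot.eventually_ge_atTop 0).exists_forall_of_atTop
    refine ⟨max 1 (max N₁ N₂), le_max_left _ _, ?_⟩
    intro y hy
    have hQy : 0 ≤ Q.eval y := by
      rcases le_or_gt 0 y with h | h
      · have : N₁ ≤ y := by
          rw [abs_of_nonneg h] at hy
          exact le_trans (le_trans (le_max_left _ _) (le_max_right _ _)) hy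
        exact hN₁ y this
      · have : N₂ ≤ -y := by
          rw [abs_of_neg h] at hy
          exact le_trans (le_trans (le_max_right _ _) (le_max_right _ _)) hy
        have := hN₂ (-y) this
        rwa [hQneval, neg_neg] at this
    have hev : Q.eval y = (ψ.eval y) * (ψ.eval y) - 4 * y ^ 2 := by
      simp [hQdef]
    rw [hev] at hQy
    nlinarith [sq_abs (ψ.eval y), sq_abs y, abs_nonneg (ψ.eval y), abs_nonneg y]
  -- iterates of large points stay large
  have key : ∀ x : ℝ, R ≤ |x| → ∀ m : ℕ,
      R ≤ |(fun y : ℝ => ψ.eval y)^[m] x| ∧ |x| ≤ |(fun y : ℝ => ψ.eval y)^[m] x| := by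
    intro x hx m
    induction m with
    | zero => exact ⟨by simpa using hx, by simp⟩
    | succ n ih =>
      obtain ⟨h1, h2⟩ := ih
      rw [Function.iterate_succ_apply']
      set z := (fun y : ℝ => ψ.eval y)^[n] x
      have := hR z h1
      constructor <;> nlinarith
  refine ⟨1 + R, by linarith, ?_⟩
  intro m hm x
  rcases le_or_gt R |x| with h | h
  · have := (key x h m).2
    have h1 : (0:ℝ) ≤ |(fun y : ℝ => ψ.eval y)^[m] x| := abs_nonneg _
    nlinarith
  · have h1 : (0:ℝ) ≤ |(fun y : ℝ => ψ.eval y)^[m] x| := abs_nonneg _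
    nlinarith
end

section
/- Let ψ be a real polynomial of degree at least 2, m ∈ ℕ, ψ_m the m-th iterate of ψ, ρ_m the degree of ψ_m, and δ_m = (ρ_m − 1)/ρ_m. Then there exists D_m > 0 such that |ψ_m^{(ℓ)}(x)| ≤ D_m (1 + |ψ_m(x)|)^{δ_m} for all x ∈ ℝ and all ℓ ≥ 1. -/
open Polynomial Filter Asymptotics

/-- The `m`-th compositional iterate of a polynomial (`polyIter ψ 0 = X`). -/
noncomputable def polyIter (ψ : Polynomial ℝ) : ℕ → Polynomial ℝ
  | 0 => Polynomial.X
  | m + 1 => (polyIter ψ m).comp ψ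

theorem polyIter_natDegree (ψ : ℝ[X]) : ∀ m : ℕ, (polyIter ψ m).natDegree = ψ.natDegree ^ m
  | 0 => by simp [polyIter]
  | m + 1 => by rw [polyIter, natDegree_comp, polyIter_natDegree ψ m, pow_succ]

theorem Continuous.isBigO_top_of_isBigO_cocompact {X E F : Type*} [TopologicalSpace X]
    [SeminormedAddCommGroup E] [SeminormedAddCommGroup F] {f : X → E} {g : X → F}
    (hf : Continuous f) (h : f =O[cocompact X] g) : f =O[⊤] fun x => 1 + ‖g x‖ := by
  obtain ⟨c, hc, hcg⟩ := h.exists_pos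
  obtain ⟨t, ht, hsub⟩ := mem_cocompact.1 hcg.bound
  obtain ⟨M, hM⟩ := ht.exists_bound_of_continuousOn hf.continuousOn
  refine isBigO_top.2 ⟨max M c, fun x => ?_⟩
  rw [Real.norm_of_nonneg (by positivity)]
  have hg : 0 ≤ ‖g x‖ := norm_nonneg _
  by_cases hx : x ∈ t
  · nlinarith [hM x hx, le_max_left M c, norm_nonneg (f x)]
  · nlinarith [show ‖f x‖ ≤ c * ‖g x‖ from hsub hx, le_max_right M c]

namespace Polynomial

theorem isBigO_cocompact_of_degree_le {𝕜 : Type*} [NormedField 𝕜] [LinearOrder 𝕜]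
    [IsStrictOrderedRing 𝕜] [OrderTopology 𝕜] [CompactIccSpace 𝕜] {P Q : 𝕜[X]}
    (h : P.degree ≤ Q.degree) : P.eval =O[cocompact 𝕜] Q.eval := by
  rw [cocompact_eq_atBot_atTop, isBigO_sup]
  exact ⟨isBigO_atBot_of_degree_le P Q h, isBigO_atTop_of_degree_le P Q h⟩

theorem finite_range_iterate_derivative {R : Type*} [Semiring R] (p : R[X]) :
    (Set.range fun k => derivative^[k] p).Finite := by
  refine ((Set.finite_Iic (p.natDegree + 1)).image fun k => derivative^[k] p).subset ?_
  rintro _ ⟨k, rfl⟩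
  rcases le_total k (p.natDegree + 1) with hk | hk
  · exact ⟨k, hk, rfl⟩
  · exact ⟨p.natDegree + 1, Set.mem_Iic.2 le_rfl,
      (iterate_derivative_eq_zero (by omega)).trans (iterate_derivative_eq_zero (by omega)).symm⟩

/-- Since `Q ^ n` has degree at most that of `P ^ (n - 1)`, where `n = deg P`, we get
`|Q| ^ n = O(1 + |P| ^ (n - 1))` globally; now take `n`-th roots. -/
theorem isBigO_top_one_add_abs_eval_rpow_of_natDegree_lt {P Q : ℝ[X]}
    (hQ : Q.natDegree < P.natDegree) :
    Q.eval =O[⊤] fun x => (1 + |P.eval x|) ^ (((P.natDegree : ℝ) - 1) / P.natDegree) := by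
  set n := P.natDegree
  have hn : n ≠ 0 := by omega
  have hP : P ≠ 0 := by rintro rfl; simp [n] at hn
  have hdeg : (Q ^ n).degree ≤ (P ^ (n - 1)).degree := by
    rw [degree_eq_natDegree (pow_ne_zero _ hP), natDegree_pow]
    refine degree_le_natDegree.trans (WithBot.coe_le_coe.2 (natDegree_pow_le.trans ?_))
    rw [mul_comm]
    exact Nat.mul_le_mul_right n (by omega)
  obtain ⟨C, hC, hCbound⟩ := ((Q ^ n).continuous.isBigO_top_of_isBigO_cocompact
    (isBigO_cocompact_of_degree_le hdeg)).exists_nonneg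
  refine isBigO_top.2 ⟨(2 * C) ^ (n⁻¹ : ℝ), fun x => ?_⟩
  have hpow : |Q.eval x| ^ n ≤ 2 * C * (1 + |P.eval x|) ^ (n - 1) := by
    have h := isBigOWith_top.1 hCbound x
    simp only [eval_pow, norm_pow, Real.norm_eq_abs] at h
    rw [abs_of_nonneg (by positivity : (0 : ℝ) ≤ 1 + |P.eval x| ^ (n - 1))] at h
    have : 1 + |P.eval x| ^ (n - 1) ≤ 2 * (1 + |P.eval x|) ^ (n - 1) := by
      rw [two_mul]
      gcongr
      · exact one_le_pow₀ (by simp)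
      · simp
    nlinarith
  rw [Real.norm_eq_abs, Real.norm_of_nonneg (by positivity)]
  calc |Q.eval x| = (|Q.eval x| ^ n) ^ (n⁻¹ : ℝ) :=
        (Real.pow_rpow_inv_natCast (abs_nonneg _) hn).symm
    _ ≤ (2 * C * (1 + |P.eval x|) ^ (n - 1)) ^ (n⁻¹ : ℝ) := by gcongr
    _ = (2 * C) ^ (n⁻¹ : ℝ) * (1 + |P.eval x|) ^ (((n : ℝ) - 1) / n) := by
      rw [Real.mul_rpow (by positivity) (by positivity), ← Real.rpow_natCast,
        ← Real.rpow_mul (by positivity), Nat.cast_sub (by omega), Nat.cast_one, div_eq_mul_inv]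

end Polynomial

theorem stmt_5_general (ψ : Polynomial ℝ) (hd : 2 ≤ ψ.natDegree) (m : ℕ) :
    ∃ D : ℝ, 0 < D ∧ ∀ x : ℝ, ∀ ℓ : ℕ, 1 ≤ ℓ →
      |((Polynomial.derivative^[ℓ]) (polyIter ψ m)).eval x| ≤
        D * (1 + |(polyIter ψ m).eval x|) ^
          ((((polyIter ψ m).natDegree : ℝ) - 1) / ((polyIter ψ m).natDegree : ℝ)) := by
  set P := polyIter ψ m
  have hP : 0 < P.natDegree := by
    rw [polyIter_natDegree]
    exact pow_pos (by omega) m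
  have hfin : (Set.range fun k => derivative^[k + 1] P).Finite :=
    (finite_range_iterate_derivative P).subset fun _ ⟨k, hk⟩ => ⟨k + 1, hk⟩
  have hbig : ∀ Q ∈ Set.range (fun k => derivative^[k + 1] P), ∀ᶠ c in atTop,
      IsBigOWith c ⊤ Q.eval
        fun x => (1 + |P.eval x|) ^ (((P.natDegree : ℝ) - 1) / P.natDegree) := by
    rintro _ ⟨k, rfl⟩
    refine isBigO_iff_eventually_isBigOWith.1 (isBigO_top_one_add_abs_eval_rpow_of_natDegree_lt ?_)
    exact (natDegree_iterate_derivative P (k + 1)).trans_lt (by omega)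
  obtain ⟨D, hD, hDpos⟩ :=
    (((eventually_all_finite hfin).2 hbig).and (eventually_gt_atTop 0)).exists
  refine ⟨D, hDpos, fun x ℓ hℓ => ?_⟩
  obtain ⟨k, rfl⟩ := Nat.exists_eq_add_of_le' hℓ
  have h := isBigOWith_top.1 (hD _ ⟨k, rfl⟩) x
  rwa [Real.norm_eq_abs, Real.norm_of_nonneg (by positivity)] at h

theorem stmt_5 (ψ : Polynomial ℝ) (hd : 2 ≤ ψ.natDegree) (m : ℕ) (hm : 1 ≤ m) :
    ∃ D : ℝ, 0 < D ∧ ∀ x : ℝ, ∀ ℓ : ℕ, 1 ≤ ℓ →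
      |((Polynomial.derivative^[ℓ]) (polyIter ψ m)).eval x| ≤
        D * (1 + |(polyIter ψ m).eval x|) ^
          ((((polyIter ψ m).natDegree : ℝ) - 1) / ((polyIter ψ m).natDegree : ℝ)) :=
  stmt_5_general ψ hd m
end
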